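/- arXiv:1210.2995 — 2 statements merged into one kernel-verified Lean document; each statement's English description precedes it below -/
import Mathlib

section
/- K{{t}} with the higher topology is not bornological: the norm Σ_{i∈ℤ} x_i t^i ↦ sup_{i∈ℤ} |x_i| (the absolute value attached to the discrete valuation of K{{t}}) is bounded on every bounded subset of K{{t}}, but it is not continuous for the higher topology, its unit ball 𝒪{{t}} being closed but not open. -/
/-!
Common setting: `K` is a characteristic-zero local field (a finite extension of `ℚ_p`)
with ring of integers `𝒪 = {c : K | ‖c‖ ≤ 1}`, maximal ideal `𝔭 = {c : K | ‖c‖ < 1}`,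
residue field of cardinality `q` and the absolute value normalised by `‖π‖ = q⁻¹`.
We formalise the two-dimensional local fields `K((t))` (as `LaurentSeries K`) and
`K{{t}}` (as the submodule `mixedCarrier K` of `ℤ → K`), their higher topologies, and
the relevant functional-analytic notions (lattices, seminorms, boundedness,
c-compactness, compactoidness, completeness for nets, duality).
-/

open Filter Topology Set Pointwise
open scoped Classical

noncomputable section

namespace TwoDimLF

variable (K : Type) [NontriviallyNormedField K]

/-- `K` is a characteristic-zero nonarchimedean local field: the norm is nonarchimedean,
takes the values `q^ℤ` on `K˟` (with a uniformizer of norm `q⁻¹`), `K` is complete, locally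
compact, of characteristic zero, and the residue field has exactly `q` elements. -/
structure IsCharZeroLocalField (q : ℕ) : Prop where
  nonarch : ∀ x y : K, ‖x + y‖ ≤ max ‖x‖ ‖y‖
  one_lt_q : 1 < q
  norm_values : ∀ x : K, x ≠ 0 → ∃ n : ℤ, ‖x‖ = (q : ℝ) ^ (-n)
  exists_uniformizer : ∃ π : K, ‖π‖ = ((q : ℝ))⁻¹
  charZero : CharZero K
  locallyCompact : LocallyCompactSpace K
  complete : CompleteSpace K
  residue_card : ∃ s : Finset K, s.card = q ∧
    ∀ x : K, ‖x‖ ≤ 1 → ∃! y, y ∈ s ∧ ‖x - y‖ < 1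

/-- The fractional ideal `𝔭^n ⊆ K` for `n ∈ ℤ ∪ {-∞}`, with the convention `𝔭^(-∞) = K`. -/
def pB (q : ℕ) (n : WithBot ℤ) : Set K :=
  WithBot.recBotCoe Set.univ (fun m : ℤ => {x : K | ‖x‖ ≤ (q : ℝ) ^ (-m)}) n

/-- The fractional ideal `𝔭^n ⊆ K` for `n ∈ ℤ ∪ {∞}`, with the convention `𝔭^∞ = {0}`. -/
def pT (q : ℕ) (n : WithTop ℤ) : Set K :=
  WithTop.recTopCoe {0} (fun m : ℤ => {x : K | ‖x‖ ≤ (q : ℝ) ^ (-m)}) n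

/-- The fractional ideal `𝔭^n ⊆ K` for `n ∈ ℤ ∪ {±∞}`. -/
def pE (q : ℕ) (n : WithBot (WithTop ℤ)) : Set K :=
  WithBot.recBotCoe Set.univ (fun m : WithTop ℤ => pT K q m) n

/-- `q ^ n ∈ ℝ` for `n ∈ ℤ ∪ {-∞}`, with the convention `q^(-∞) = 0`. -/
def qpow (q : ℕ) (n : WithBot ℤ) : ℝ :=
  WithBot.recBotCoe 0 (fun m : ℤ => (q : ℝ) ^ m) n

/-- `1 - k` for `k ∈ ℤ ∪ {±∞}` (so `1 - (±∞) = ∓∞`). -/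
def oneSubE : WithBot (WithTop ℤ) → WithBot (WithTop ℤ) :=
  WithBot.recBotCoe ((⊤ : WithTop ℤ) : WithBot (WithTop ℤ))
    (WithTop.recTopCoe (⊥ : WithBot (WithTop ℤ))
      (fun z : ℤ => (((1 - z : ℤ) : WithTop ℤ) : WithBot (WithTop ℤ))))

section LCS

variable {V : Type} [AddCommGroup V] [Module K V]

/-- `S` is an `𝒪`-submodule of the `K`-vector space `V`, where `𝒪 = {c : K | ‖c‖ ≤ 1}`
is the ring of integers of `K`. -/
def IsOSubmodule (S : Set V) : Prop :=
  (0 : V) ∈ S ∧ (∀ x ∈ S, ∀ y ∈ S, x + y ∈ S) ∧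
    ∀ c : K, ‖c‖ ≤ 1 → ∀ x ∈ S, c • x ∈ S

/-- `S` is an `𝒪`-lattice in `V`: an `𝒪`-submodule such that every vector is carried
into `S` by some nonzero scalar. -/
def IsLatticeSet (S : Set V) : Prop :=
  IsOSubmodule K S ∧ ∀ v : V, ∃ a : K, a ≠ 0 ∧ a • v ∈ S

/-- A (nonarchimedean) seminorm on the `K`-vector space `V`. -/
def IsSeminorm (N : V → ℝ) : Prop :=
  (∀ (c : K) (v : V), N (c • v) = ‖c‖ * N v) ∧ ∀ v w : V, N (v + w) ≤ max (N v) (N w)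

/-- The gauge seminorm of a lattice `Λ ⊆ V`: `‖v‖_Λ = inf {‖a‖ : v ∈ aΛ}`. -/
def gaugeSeminorm (Λ : Set V) (v : V) : ℝ :=
  sInf {r : ℝ | ∃ a : K, v ∈ a • Λ ∧ r = ‖a‖}

/-- The group topology on `W` determined by a family `B` of neighbourhoods of zero:
neighbourhoods of `x` are generated by the translates `x + U`, `U ∈ B`. -/
def addTopologyOf {W : Type} [AddCommGroup W] (B : Set (Set W)) : TopologicalSpace W :=
  TopologicalSpace.mkOfNhds fun x => Filter.map (fun v => x + v) (⨅ U ∈ B, Filter.principal U)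

/-- `B` is (Von-Neumann) bounded for the locally convex topology `τ`: every open lattice
absorbs it. -/
def IsVNBounded (τ : TopologicalSpace V) (B : Set V) : Prop :=
  ∀ Λ : Set V, IsLatticeSet K Λ → IsOpen[τ] Λ → ∃ a : K, B ⊆ a • Λ

/-- The `𝒪`-submodule `A ⊆ V` is c-compact: for every decreasing filtered family of open
lattices `L i`, the canonical map `A → lim A/(L i ∩ A)` is surjective (phrased via
compatible families of representatives). -/
def IsCCompact (τ : TopologicalSpace V) (A : Set V) : Prop :=
  ∀ (ι : Type) (L : ι → Set V),
    (∀ i, IsLatticeSet K (L i) ∧ IsOpen[τ] (L i)) →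
    (∀ i j, ∃ k, L k ⊆ L i ∧ L k ⊆ L j) →
    ∀ x : ι → V, (∀ i, x i ∈ A) →
      (∀ i j, L j ⊆ L i → x j - x i ∈ L i) →
      ∃ a ∈ A, ∀ i, a - x i ∈ L i

/-- The `𝒪`-submodule `A ⊆ V` is compactoid: for every open lattice `Λ` there are finitely
many vectors `v₁, …, v_m ∈ V` with `A ⊆ Λ + 𝒪v₁ + ⋯ + 𝒪v_m`. -/
def IsCompactoid (τ : TopologicalSpace V) (A : Set V) : Prop :=
  ∀ Λ : Set V, IsLatticeSet K Λ → IsOpen[τ] Λ →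
    ∃ (m : ℕ) (v : Fin m → V),
      A ⊆ {u : V | ∃ l ∈ Λ, ∃ c : Fin m → K, (∀ j, ‖c j‖ ≤ 1) ∧ u = l + ∑ j, c j • v j}

/-- `A ⊆ V` is complete: every Cauchy net with values in `A` converges to a point of `A`
(for the topology `τ`). -/
def IsNetComplete (τ : TopologicalSpace V) (A : Set V) : Prop :=
  ∀ (ι : Type) [Preorder ι] [Nonempty ι],
    (∀ i j : ι, ∃ k, i ≤ k ∧ j ≤ k) →
    ∀ x : ι → V, (∀ i, x i ∈ A) →
      (∀ U ∈ @nhds V τ 0, ∃ i0, ∀ j ≥ i0, ∀ k ≥ i0, x j - x k ∈ U) →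
      ∃ a ∈ A, Filter.Tendsto x Filter.atTop (@nhds V τ a)

/-- `τ` makes `V` a locally convex topological `K`-vector space: it is a vector-space
topology whose filter of neighbourhoods of zero admits a basis of lattices. -/
def IsLCTVS (τ : TopologicalSpace V) : Prop :=
  @IsTopologicalAddGroup V τ _ ∧ @ContinuousSMul K V _ _ τ ∧
    ∀ S ∈ @nhds V τ 0, ∃ Λ : Set V, IsLatticeSet K Λ ∧ Λ ∈ @nhds V τ 0 ∧ Λ ⊆ S

/-- The topological dual of `(V, τ)`: continuous `K`-linear forms, as a set of functions. -/
def dualSet (τ : TopologicalSpace V) : Set (V → K) :=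
  {l | IsLinearMap K l ∧ @Continuous V K τ _ l}

/-- Basic neighbourhoods of zero for the `c`-topology on `V → K`: uniform convergence on
compactoid `𝒪`-submodules. -/
def cTopBasic (τ : TopologicalSpace V) : Set (Set (V → K)) :=
  {S | ∃ (B : Set V) (ε : ℝ), IsOSubmodule K B ∧ IsCompactoid K τ B ∧ 0 < ε ∧
    S = {l : V → K | ∀ x ∈ B, ‖l x‖ ≤ ε}}

/-- The `c`-topology (uniform convergence on compactoid `𝒪`-submodules) on `V → K`. -/
def cTop (τ : TopologicalSpace V) : TopologicalSpace (V → K) :=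
  addTopologyOf (cTopBasic K τ)

/-- The pseudo-polar `A^p = {l ∈ V' : |l(v)| < 1 for all v ∈ A}`. -/
def pseudoPolar (τ : TopologicalSpace V) (A : Set V) : Set (V → K) :=
  {l | l ∈ dualSet K τ ∧ ∀ v ∈ A, ‖l v‖ < 1}

/-- The pseudo-bipolar `A^{pp} = {v ∈ V : |l(v)| < 1 for all l ∈ A^p}`. -/
def pseudoBipolar (τ : TopologicalSpace V) (A : Set V) : Set V :=
  {v | ∀ l ∈ pseudoPolar K τ A, ‖l v‖ < 1}

end LCS

/-! ### The equal characteristic field `K((t))` -/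

/-- Basic neighbourhoods of zero for the higher topology on `K((t))`:
`Σ U_i t^i` where each `U_i` is an open neighbourhood of `0` in `K` and `U_i = K` for all
sufficiently large `i`. -/
def laurentBasic : Set (Set (LaurentSeries K)) :=
  {S | ∃ U : ℤ → Set K, (∀ i, IsOpen (U i) ∧ (0 : K) ∈ U i) ∧
    (∃ N : ℤ, ∀ i, N ≤ i → U i = Set.univ) ∧
    S = {f : LaurentSeries K | ∀ i, f.coeff i ∈ U i}}

/-- The higher topology on `K((t))`. -/
def laurentTop : TopologicalSpace (LaurentSeries K) := addTopologyOf (laurentBasic K)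

/-- `Λ = Σ_{i∈ℤ} 𝔭^{n_i} t^i ⊆ K((t))` for a sequence `(n_i) ⊆ ℤ ∪ {-∞}`. -/
def laurentLambda (q : ℕ) (n : ℤ → WithBot ℤ) : Set (LaurentSeries K) :=
  {f | ∀ i, f.coeff i ∈ pB K q (n i)}

/-- `B = Σ_{i∈ℤ} 𝔭^{k_i} t^i ⊆ K((t))` for a sequence `(k_i) ⊆ ℤ ∪ {∞}`. -/
def laurentPT (q : ℕ) (k : ℤ → WithTop ℤ) : Set (LaurentSeries K) :=
  {f | ∀ i, f.coeff i ∈ pT K q (k i)}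

/-- `A = Σ_{i∈ℤ} 𝔭^{k_i} t^i ⊆ K((t))` for a sequence `(k_i) ⊆ ℤ ∪ {±∞}`. -/
def laurentPE (q : ℕ) (k : ℤ → WithBot (WithTop ℤ)) : Set (LaurentSeries K) :=
  {f | ∀ i, f.coeff i ∈ pE K q (k i)}

/-- The admissible seminorm `‖Σ x_i t^i‖ = max_i ‖x_i‖ q^{n_i}` on `K((t))`. -/
def laurentSeminorm (q : ℕ) (n : ℤ → WithBot ℤ) (f : LaurentSeries K) : ℝ :=
  sSup {r : ℝ | ∃ i : ℤ, r = ‖f.coeff i‖ * qpow q (n i)}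

/-- The ring of integers `K[[t]] ⊆ K((t))`. -/
def laurentIntegers : Set (LaurentSeries K) := {f | ∀ i, i < 0 → f.coeff i = 0}

/-- The rank-two ring of integers `𝒪 + tK[[t]] ⊆ K((t))`. -/
def laurentRankTwo : Set (LaurentSeries K) :=
  {f | (∀ i, i < 0 → f.coeff i = 0) ∧ ‖f.coeff 0‖ ≤ 1}

/-- The pairing `γ(x)(y) = π₀(xy) = Σ_i x_i y_{-i}` on `K((t))`. -/
def laurentPairing (x y : LaurentSeries K) : K := ∑' i : ℤ, x.coeff i * y.coeff (-i)

/-! ### The mixed characteristic field `K{{t}}` -/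

/-- The underlying `K`-vector space of `K{{t}}`: functions `x : ℤ → K` (coefficients of
`Σ x_i t^i`) with `inf_i v_K(x_i) > -∞` (i.e. bounded norms) and `x_i → 0` as `i → -∞`. -/
def mixedCarrier : Submodule K (ℤ → K) where
  carrier := {x | (∃ C : ℝ, ∀ i, ‖x i‖ ≤ C) ∧ Filter.Tendsto x Filter.atBot (nhds (0 : K))}
  zero_mem' := ⟨⟨0, fun i => by simp⟩, tendsto_const_nhds⟩
  add_mem' := by
    rintro x y ⟨⟨C, hC⟩, hx⟩ ⟨⟨D, hD⟩, hy⟩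
    refine ⟨⟨C + D, fun i => (norm_add_le _ _).trans (add_le_add (hC i) (hD i))⟩, ?_⟩
    simpa [Pi.add_def] using hx.add hy
  smul_mem' := by
    rintro c x ⟨⟨C, hC⟩, hx⟩
    refine ⟨⟨‖c‖ * C, fun i => ?_⟩, ?_⟩
    · have h : ‖(c • x) i‖ = ‖c‖ * ‖x i‖ := by simp [norm_smul]
      rw [h]
      exact mul_le_mul_of_nonneg_left (hC i) (norm_nonneg c)
    · simpa [Pi.smul_def] using hx.const_smul c

/-- The field `K{{t}}`, as a `K`-vector space. -/
abbrev Mt := ↥(mixedCarrier K)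

/-- Basic neighbourhoods of zero for the higher topology on `K{{t}}`:
`Σ V_i t^i` where each `V_i` is an open neighbourhood of `0` in `K`, some `𝔭^c` is
contained in every `V_i`, and for every `l` eventually `𝔭^l ⊆ V_i`. -/
def mixedBasic (q : ℕ) : Set (Set (Mt K)) :=
  {S | ∃ Vs : ℤ → Set K, (∀ i, IsOpen (Vs i) ∧ (0 : K) ∈ Vs i) ∧
    (∃ c : ℤ, ∀ i, {x : K | ‖x‖ ≤ (q : ℝ) ^ (-c)} ⊆ Vs i) ∧
    (∀ l : ℤ, ∃ i0 : ℤ, ∀ i, i0 ≤ i → {x : K | ‖x‖ ≤ (q : ℝ) ^ (-l)} ⊆ Vs i) ∧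
    S = {f : Mt K | ∀ i, f.1 i ∈ Vs i}}

/-- The higher topology on `K{{t}}`. -/
def mixedTop (q : ℕ) : TopologicalSpace (Mt K) := addTopologyOf (mixedBasic K q)

/-- `Λ = Σ_{i∈ℤ} 𝔭^{n_i} t^i ⊆ K{{t}}` for a sequence `(n_i) ⊆ ℤ ∪ {-∞}`. -/
def mixedLambda (q : ℕ) (n : ℤ → WithBot ℤ) : Set (Mt K) :=
  {f | ∀ i, f.1 i ∈ pB K q (n i)}

/-- `B = Σ_{i∈ℤ} 𝔭^{k_i} t^i ⊆ K{{t}}` for a sequence `(k_i) ⊆ ℤ ∪ {∞}`. -/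
def mixedPT (q : ℕ) (k : ℤ → WithTop ℤ) : Set (Mt K) :=
  {f | ∀ i, f.1 i ∈ pT K q (k i)}

/-- `A = Σ_{i∈ℤ} 𝔭^{k_i} t^i ⊆ K{{t}}` for a sequence `(k_i) ⊆ ℤ ∪ {±∞}`. -/
def mixedPE (q : ℕ) (k : ℤ → WithBot (WithTop ℤ)) : Set (Mt K) :=
  {f | ∀ i, f.1 i ∈ pE K q (k i)}

/-- The admissible seminorm `‖Σ x_i t^i‖ = sup_i ‖x_i‖ q^{n_i}` on `K{{t}}`. -/
def mixedSeminorm (q : ℕ) (n : ℤ → WithBot ℤ) (f : Mt K) : ℝ :=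
  sSup {r : ℝ | ∃ i : ℤ, r = ‖f.1 i‖ * qpow q (n i)}

/-- The ring of integers `𝒪{{t}} ⊆ K{{t}}`. -/
def mixedIntegers : Set (Mt K) := {f | ∀ i, ‖f.1 i‖ ≤ 1}

/-- The rank-two ring of integers `Σ_{i<0} 𝔭 t^i + Σ_{i≥0} 𝒪 t^i ⊆ K{{t}}`. -/
def mixedRankTwo (q : ℕ) : Set (Mt K) :=
  {f | (∀ i : ℤ, i < 0 → ‖f.1 i‖ ≤ ((q : ℝ))⁻¹) ∧ ∀ i : ℤ, 0 ≤ i → ‖f.1 i‖ ≤ 1}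

/-- The monomial `t^i ∈ K{{t}}`. -/
def mixedT (i : ℤ) : Mt K :=
  ⟨fun j => if j = i then 1 else 0,
    ⟨⟨1, fun j => by by_cases h : j = i <;> simp [h]⟩, by
      refine (tendsto_const_nhds : Filter.Tendsto (fun _ : ℤ => (0 : K))
        Filter.atBot (nhds 0)).congr' ?_
      filter_upwards [Filter.eventually_le_atBot (i - 1)] with j hj
      have h : j ≠ i := by omega
      simp [h]⟩⟩

/-- Coefficients of the product of two elements of `K{{t}}` (Cauchy product). -/
def mixedMulCoeff (x y : Mt K) : ℤ → K := fun k => ∑' i : ℤ, x.1 i * y.1 (k - i)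

/-- Multiplication on `K{{t}}`. -/
def mixedMul (x y : Mt K) : Mt K :=
  if h : mixedMulCoeff K x y ∈ mixedCarrier K then ⟨_, h⟩ else 0

/-- The pairing `γ(x)(y) = π₀(xy) = Σ_i x_i y_{-i}` on `K{{t}}`. -/
def mixedPairing (x y : Mt K) : K := ∑' i : ℤ, x.1 i * y.1 (-i)


/-!
The higher topology is much coarser than the norm topology: a basic neighbourhood of zero
contains `c t^i` for every `c ∈ K` once `i` is large, so no neighbourhood of zero lies in the
unit ball `𝒪{{t}}`, which is therefore not open, and the sup-norm is not continuous. The ball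
is still closed, being an intersection of preimages of closed balls under the coefficient maps,
which are continuous.

A bounded set `B` is absorbed by each open lattice `Σ_i {x : ‖x‖ ≤ ρ i} t^i` with radii
`ρ ≥ 1` tending to `∞`. Taking `ρ i = max 1 (i - n)` bounds the coefficients of `B` in degrees
`≤ n`; if their running supremum `A n` were unbounded, the radii `ρ i = √(A i)` would give
`A n ≤ C √(A n)` for all `n`, a contradiction.
-/

theorem exists_forall_le_of_forall_le_mul {F : Set (ℤ → ℝ)}
    (hF : ∀ ρ : ℤ → ℝ, (∀ i, 1 ≤ ρ i) → Tendsto ρ atTop atTop →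
      ∃ C, ∀ x ∈ F, ∀ i, x i ≤ C * ρ i) :
    ∃ C, ∀ x ∈ F, ∀ i, x i ≤ C := by
  by_contra! hunb
  set S : ℤ → Set ℝ := fun n => {r | ∃ x ∈ F, ∃ j ≤ n, r = x j}
  have hS_mono : Monotone S := fun m n hmn => by
    rintro _ ⟨x, hx, j, hj, rfl⟩
    exact ⟨x, hx, j, hj.trans hmn, rfl⟩
  have hS_ne : ∀ n, (S n).Nonempty := fun n => by
    obtain ⟨x, hx, -⟩ := hunb 0
    exact ⟨x n, x, hx, n, le_rfl, rfl⟩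
  have hS_bdd : ∀ n, BddAbove (S n) := by
    intro n
    obtain ⟨C, hC⟩ := hF (fun i => max 1 ((i : ℝ) - n)) (fun i => le_max_left _ _)
      (tendsto_atTop_mono (fun i => le_max_right _ _)
        (tendsto_atTop_add_const_right _ _ tendsto_intCast_atTop_atTop))
    refine ⟨C, ?_⟩
    rintro _ ⟨x, hx, j, hj, rfl⟩
    have hρ : max 1 ((j : ℝ) - n) = 1 := max_eq_left (by linarith [(Int.cast_le (R := ℝ)).2 hj])
    simpa [hρ] using hC x hx j
  set A : ℤ → ℝ := fun n => sSup (S n)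
  have hA : Tendsto A atTop atTop := by
    refine tendsto_atTop_atTop_of_monotone
      (fun m n hmn => csSup_le_csSup (hS_bdd n) (hS_ne m) (hS_mono hmn)) fun b => ?_
    obtain ⟨x, hx, i, hi⟩ := hunb b
    exact ⟨i, hi.le.trans (le_csSup (hS_bdd i) ⟨x, hx, i, le_rfl, rfl⟩)⟩
  -- testing against the radii `√(A i)` gives `A n ≤ C √(A n)`, so `A` would be bounded
  obtain ⟨C, hC⟩ := hF (fun i => max 1 √(A i)) (fun i => le_max_left _ _)
    (tendsto_atTop_mono (fun i => le_max_right _ _) (Real.tendsto_sqrt_atTop.comp hA))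
  have hA_le : ∀ n, A n ≤ max C 0 * max 1 √(A n) := fun n => by
    refine csSup_le (hS_ne n) ?_
    rintro _ ⟨x, hx, j, hj, rfl⟩
    have hAj : A j ≤ A n := csSup_le_csSup (hS_bdd n) (hS_ne j) (hS_mono hj)
    calc x j ≤ C * max 1 √(A j) := hC x hx j
      _ ≤ max C 0 * max 1 √(A j) := by gcongr; exact le_max_left _ _
      _ ≤ max C 0 * max 1 √(A n) := by gcongr
  obtain ⟨n, hn⟩ := (hA.eventually_gt_atTop (max 1 (max C 0 ^ 2))).exists
  have h1 : 1 ≤ √(A n) := Real.one_le_sqrt.2 (le_of_max_le_left hn.le)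
  have hsq : √(A n) * √(A n) = A n := Real.mul_self_sqrt (by linarith [le_of_max_le_left hn.le])
  have := hA_le n
  rw [max_eq_right h1] at this
  nlinarith [(max_lt_iff.1 hn).2, le_max_right C 0]

theorem isOpen_addTopologyOf_iff {W : Type} [AddCommGroup W] {B : Set (Set W)}
    (hB : ∀ U ∈ B, ∀ V ∈ B, ∃ T ∈ B, T ⊆ U ∩ V) (hne : B.Nonempty) {S : Set W} :
    IsOpen[addTopologyOf B] S ↔ ∀ x ∈ S, ∃ U ∈ B, ∀ u ∈ U, x + u ∈ S := by
  have hdir : DirectedOn (Filter.principal ⁻¹'o (· ≥ ·)) B := fun U hU V hV => by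
    obtain ⟨T, hT, hTUV⟩ := hB U hU V hV
    exact ⟨T, hT, principal_mono.2 (hTUV.trans inter_subset_left),
      principal_mono.2 (hTUV.trans inter_subset_right)⟩
  refine forall₂_congr fun x _ => ?_
  rw [mem_map, mem_biInf_of_directed hdir hne]
  rfl

section MixedTopology

variable {K} {q : ℕ}

theorem coe_smul_mixedT_apply (c : K) (i j : ℤ) :
    (c • mixedT K i).1 j = if j = i then c else 0 := by
  simp [mixedT]

theorem univ_mem_mixedBasic : (univ : Set (Mt K)) ∈ mixedBasic K q :=
  ⟨fun _ => univ, fun _ => ⟨isOpen_univ, trivial⟩, ⟨0, fun _ => subset_univ _⟩,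
    fun _ => ⟨0, fun _ _ => subset_univ _⟩, by simp⟩

theorem exists_mixedBasic_subset_inter (hq : 1 ≤ q) :
    ∀ U ∈ mixedBasic K q, ∀ V ∈ mixedBasic K q, ∃ T ∈ mixedBasic K q, T ⊆ U ∩ V := by
  have hq' : (1 : ℝ) ≤ q := Nat.one_le_cast.2 hq
  rintro _ ⟨Vs, hV, ⟨c₁, hc₁⟩, hVl, rfl⟩ _ ⟨Ws, hW, ⟨c₂, hc₂⟩, hWl, rfl⟩
  refine ⟨_, ⟨fun i => Vs i ∩ Ws i, fun i => ⟨(hV i).1.inter (hW i).1, (hV i).2, (hW i).2⟩,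
    ⟨max c₁ c₂, fun i x hx => ⟨hc₁ i ?_, hc₂ i ?_⟩⟩, fun l => ?_, rfl⟩,
    fun f hf => ⟨fun i => (hf i).1, fun i => (hf i).2⟩⟩
  · exact hx.out.trans (zpow_le_zpow_right₀ hq' (by omega))
  · exact hx.out.trans (zpow_le_zpow_right₀ hq' (by omega))
  · obtain ⟨i₁, hi₁⟩ := hVl l
    obtain ⟨i₂, hi₂⟩ := hWl l
    exact ⟨max i₁ i₂, fun i hi => subset_inter (hi₁ i (le_of_max_le_left hi))
      (hi₂ i (le_of_max_le_right hi))⟩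

theorem isOpen_mixedTop_iff (hq : 1 ≤ q) {S : Set (Mt K)} :
    IsOpen[mixedTop K q] S ↔ ∀ x ∈ S, ∃ U ∈ mixedBasic K q, ∀ u ∈ U, x + u ∈ S :=
  isOpen_addTopologyOf_iff (exists_mixedBasic_subset_inter hq) ⟨_, univ_mem_mixedBasic⟩

theorem continuous_coeff (hq : 1 < q) (i : ℤ) :
    @Continuous _ _ (mixedTop K q) _ (fun f : Mt K => f.1 i) := by
  have hq' : (1 : ℝ) < q := Nat.one_lt_cast.2 hq
  rw [continuous_def]
  intro W hW
  rw [isOpen_mixedTop_iff hq.le]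
  intro x hx
  obtain ⟨ε, hε, hball⟩ := Metric.isOpen_iff.1 hW _ hx
  obtain ⟨n, hn⟩ := pow_unbounded_of_one_lt ε⁻¹ hq'
  let Vs : ℤ → Set K := fun j => if j = i then Metric.ball 0 ε else univ
  refine ⟨_, ⟨Vs, fun j => ?_, ⟨n, fun j y hy => ?_⟩, fun l => ⟨i + 1, fun j hj => ?_⟩, rfl⟩,
    fun u hu => hball ?_⟩
  · by_cases hj : j = i
    · simp only [Vs, if_pos hj]
      exact ⟨Metric.isOpen_ball, Metric.mem_ball_self hε⟩
    · simp [Vs, hj]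
  · by_cases hj : j = i
    · have hy' : ‖y‖ ≤ ((q : ℝ) ^ n)⁻¹ := by simpa using hy.out
      simpa [Vs, hj] using hy'.trans_lt ((inv_lt_comm₀ hε (by positivity)).1 hn)
    · simp [Vs, hj]
  · simp [Vs, show j ≠ i by omega]
  · have hui : u.1 i ∈ Metric.ball 0 ε := by simpa [Vs] using hu i
    simpa [dist_eq_norm] using hui

theorem isClosed_mixedIntegers (hq : 1 < q) : IsClosed[mixedTop K q] (mixedIntegers K) := by
  have h : mixedIntegers K = ⋂ i, (fun f : Mt K => f.1 i) ⁻¹' Metric.closedBall 0 1 := by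
    ext f
    simp [mixedIntegers]
  rw [h]
  exact @isClosed_iInter _ _ (mixedTop K q) _ fun i =>
    @IsClosed.preimage _ _ (mixedTop K q) _ _ (continuous_coeff hq i) _ Metric.isClosed_closedBall

theorem exists_smul_mixedT_mem (hq : 1 < q) {S : Set (Mt K)} (hS : IsOpen[mixedTop K q] S)
    (h0 : 0 ∈ S) (c : K) : ∃ i, c • mixedT K i ∈ S := by
  obtain ⟨_, ⟨Vs, hV, -, hVl, rfl⟩, hU⟩ := (isOpen_mixedTop_iff hq.le).1 hS 0 h0
  obtain ⟨n, hn⟩ := pow_unbounded_of_one_lt ‖c‖ (Nat.one_lt_cast.2 hq : (1 : ℝ) < q)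
  obtain ⟨i, hi⟩ := hVl (-n)
  have hmem : c • mixedT K i ∈ {f : Mt K | ∀ j, f.1 j ∈ Vs j} := fun j => by
    by_cases hj : j = i
    · subst hj
      simpa [coe_smul_mixedT_apply] using hi j le_rfl (by simpa using hn.le)
    · simpa [coe_smul_mixedT_apply, hj] using (hV j).2
  exact ⟨i, by simpa using hU _ hmem⟩

theorem not_subset_mixedIntegers_of_isOpen (hq : 1 < q) {S : Set (Mt K)}
    (hS : IsOpen[mixedTop K q] S) (h0 : 0 ∈ S) : ¬ S ⊆ mixedIntegers K := by
  intro hsub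
  obtain ⟨c, hc⟩ := NormedField.exists_one_lt_norm K
  obtain ⟨i, hi⟩ := exists_smul_mixedT_mem hq hS h0 c
  have := hsub hi i
  simp only [coe_smul_mixedT_apply, if_pos] at this
  linarith

theorem not_isOpen_mixedIntegers (hq : 1 < q) : ¬ IsOpen[mixedTop K q] (mixedIntegers K) :=
  fun h => not_subset_mixedIntegers_of_isOpen hq h (fun i => by simp) subset_rfl

end MixedTopology

def mixedBall (ρ : ℤ → ℝ) : Set (Mt K) :=
  {f | ∀ i, ‖f.1 i‖ ≤ ρ i}

section SupNorm

variable {K} {q : ℕ}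

theorem bddAbove_range_norm_coeff (f : Mt K) : BddAbove (range fun i => ‖f.1 i‖) := by
  obtain ⟨C, hC⟩ := f.2.1
  exact ⟨C, forall_mem_range.2 hC⟩

theorem norm_coeff_le_iSup (f : Mt K) (i : ℤ) : ‖f.1 i‖ ≤ ⨆ j, ‖f.1 j‖ :=
  le_ciSup (bddAbove_range_norm_coeff f) i

theorem isSeminorm_iSup_norm_coeff [IsUltrametricDist K] :
    IsSeminorm K (fun f : Mt K => ⨆ i, ‖f.1 i‖) := by
  refine ⟨fun c v => ?_, fun v w => ciSup_le fun i => ?_⟩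
  · simp only [Submodule.coe_smul, Pi.smul_apply, smul_eq_mul, norm_mul]
    exact (Real.mul_iSup_of_nonneg (norm_nonneg c) _).symm
  · exact (IsUltrametricDist.norm_add_le_max _ _).trans
      (max_le_max (norm_coeff_le_iSup v i) (norm_coeff_le_iSup w i))

theorem eq_zero_of_iSup_norm_coeff_eq_zero {f : Mt K} (h : ⨆ i, ‖f.1 i‖ = 0) : f = 0 :=
  Subtype.ext <| funext fun i => norm_le_zero_iff.1 (h ▸ norm_coeff_le_iSup f i)

theorem setOf_iSup_norm_coeff_le_one :
    {f : Mt K | ⨆ i, ‖f.1 i‖ ≤ 1} = mixedIntegers K :=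
  ext fun f => ciSup_le_iff (bddAbove_range_norm_coeff f)

theorem not_continuous_iSup_norm_coeff (hq : 1 < q) :
    ¬ @Continuous _ _ (mixedTop K q) _ (fun f : Mt K => ⨆ i, ‖f.1 i‖) := by
  intro hcont
  refine not_subset_mixedIntegers_of_isOpen hq
    (@Continuous.isOpen_preimage _ _ (mixedTop K q) _ _ hcont _ isOpen_Iio)
    (show (⨆ i, ‖(0 : Mt K).1 i‖) < 1 by simp) ?_
  rw [← setOf_iSup_norm_coeff_le_one]
  exact fun f hf => show (⨆ i, ‖f.1 i‖) ≤ 1 from (mem_Iio.1 hf).le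

variable [IsUltrametricDist K] {ρ : ℤ → ℝ}

theorem mixedBall_mem_mixedBasic (hρ₁ : ∀ i, 1 ≤ ρ i) (hρ : Tendsto ρ atTop atTop) :
    mixedBall K ρ ∈ mixedBasic K q := by
  refine ⟨fun i => {x | ‖x‖ ≤ ρ i}, fun i => ⟨?_, by simpa using zero_le_one.trans (hρ₁ i)⟩,
    ⟨0, fun i x hx => ?_⟩, fun l => ?_, rfl⟩
  · have hball : {x : K | ‖x‖ ≤ ρ i} = Metric.closedBall 0 (ρ i) := by ext; simp
    show IsOpen {x : K | ‖x‖ ≤ ρ i}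
    rw [hball]
    exact IsUltrametricDist.isOpen_closedBall 0 (zero_lt_one.trans_le (hρ₁ i)).ne'
  · exact (show ‖x‖ ≤ 1 by simpa using hx.out).trans (hρ₁ i)
  · obtain ⟨i₀, hi₀⟩ := eventually_atTop.1 (hρ.eventually_ge_atTop ((q : ℝ) ^ (-l)))
    exact ⟨i₀, fun i hi x hx => hx.out.trans (hi₀ i hi)⟩

theorem isOpen_mixedBall (hq : 1 ≤ q) (hρ₁ : ∀ i, 1 ≤ ρ i) (hρ : Tendsto ρ atTop atTop) :
    IsOpen[mixedTop K q] (mixedBall K ρ) :=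
  (isOpen_mixedTop_iff hq).2 fun _ hf => ⟨_, mixedBall_mem_mixedBasic hρ₁ hρ, fun _ hu i =>
    (IsUltrametricDist.norm_add_le_max _ _).trans (max_le (hf i) (hu i))⟩

theorem isLatticeSet_mixedBall (hρ₁ : ∀ i, 1 ≤ ρ i) : IsLatticeSet K (mixedBall K ρ) := by
  refine ⟨⟨fun i => by simpa using zero_le_one.trans (hρ₁ i), fun f hf g hg i => ?_,
    fun c hc f hf i => ?_⟩, fun f => ?_⟩
  · exact (IsUltrametricDist.norm_add_le_max _ _).trans (max_le (hf i) (hg i))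
  · simpa [norm_mul] using (mul_le_of_le_one_left (norm_nonneg _) hc).trans (hf i)
  · obtain ⟨C, hC⟩ := f.2.1
    have hM : 0 < max C 1 := lt_max_of_lt_right one_pos
    obtain ⟨a, ha₀, ha⟩ := NormedField.exists_norm_lt K (inv_pos.2 hM)
    refine ⟨a, norm_pos_iff.1 ha₀, fun i => ?_⟩
    calc ‖(a • f).1 i‖ = ‖a‖ * ‖f.1 i‖ := by simp [norm_mul]
      _ ≤ ‖a‖ * max C 1 := by gcongr; exact (hC i).trans (le_max_left _ _)
      _ ≤ 1 := ((lt_div_iff₀ hM).1 (by rwa [one_div])).le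
      _ ≤ ρ i := hρ₁ i

theorem exists_iSup_norm_coeff_le_of_isVNBounded (hq : 1 ≤ q) {B : Set (Mt K)}
    (hB : IsVNBounded K (mixedTop K q) B) : ∃ C, ∀ f ∈ B, ⨆ i, ‖f.1 i‖ ≤ C := by
  obtain ⟨C, hC⟩ := exists_forall_le_of_forall_le_mul
    (F := (fun (f : Mt K) i => ‖f.1 i‖) '' B) fun ρ hρ₁ hρ => by
      obtain ⟨a, ha⟩ := hB _ (isLatticeSet_mixedBall hρ₁) (isOpen_mixedBall hq hρ₁ hρ)
      refine ⟨‖a‖, ?_⟩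
      rintro _ ⟨f, hf, rfl⟩ i
      obtain ⟨g, hg, rfl⟩ := ha hf
      simpa [norm_mul] using mul_le_mul_of_nonneg_left (hg i) (norm_nonneg a)
  exact ⟨C, fun f hf => ciSup_le (hC _ (mem_image_of_mem _ hf))⟩

end SupNorm

/-- `K{{t}}` with the higher topology is not bornological: the norm
`Σ x_i t^i ↦ sup_i ‖x_i‖` (the absolute value attached to the discrete valuation of `K{{t}}`)
is bounded on every bounded subset of `K{{t}}`, but it is not continuous for the higher
topology, its unit ball `𝒪{{t}}` being closed but not open. -/
theorem statement10 (q : ℕ) (hK : IsCharZeroLocalField K q) :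
    IsSeminorm K (fun f : Mt K => ⨆ i : ℤ, ‖f.1 i‖) ∧
    (∀ f : Mt K, (⨆ i : ℤ, ‖f.1 i‖) = 0 → f = 0) ∧
    (∀ B : Set (Mt K), IsVNBounded K (mixedTop K q) B →
      ∃ C : ℝ, ∀ f ∈ B, (⨆ i : ℤ, ‖f.1 i‖) ≤ C) ∧
    ¬ @Continuous _ _ (mixedTop K q) _ (fun f : Mt K => ⨆ i : ℤ, ‖f.1 i‖) ∧
    {f : Mt K | (⨆ i : ℤ, ‖f.1 i‖) ≤ 1} = mixedIntegers K ∧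
    IsClosed[mixedTop K q] (mixedIntegers K) ∧
    ¬ IsOpen[mixedTop K q] (mixedIntegers K) ∧
    ¬ (∀ N : Mt K → ℝ, IsSeminorm K N →
        (∀ B : Set (Mt K), IsVNBounded K (mixedTop K q) B → ∃ C : ℝ, ∀ f ∈ B, N f ≤ C) →
        @Continuous _ _ (mixedTop K q) _ N) := by
  have hq := hK.one_lt_q
  have : IsUltrametricDist K := .isUltrametricDist_of_forall_norm_add_le_max_norm hK.nonarch
  have hbdd : ∀ B, IsVNBounded K (mixedTop K q) B → ∃ C, ∀ f ∈ B, ⨆ i, ‖f.1 i‖ ≤ C :=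
    fun _ => exists_iSup_norm_coeff_le_of_isVNBounded hq.le
  exact ⟨isSeminorm_iSup_norm_coeff, fun _ => eq_zero_of_iSup_norm_coeff_eq_zero,
    hbdd, not_continuous_iSup_norm_coeff hq, setOf_iSup_norm_coeff_le_one,
    isClosed_mixedIntegers hq, not_isOpen_mixedIntegers hq,
    fun h => not_continuous_iSup_norm_coeff hq (h _ isSeminorm_iSup_norm_coeff hbdd)⟩

end TwoDimLF
end
end

section
/- The ring of integers K[[t]] is a complete 𝒪-submodule of K((t)) with the higher topology, and the ring of integers 𝒪{{t}} is a complete 𝒪-submodule of K{{t}} with the higher topology: in each case every Cauchy net of elements of the ring converges to an element of the ring. Consequently, the rank-two rings of integers 𝒪 + tK[[t]] ⊂ K((t)) and Σ_{i<0} 𝔭 t^i + Σ_{i≥0} 𝒪 t^i ⊂ K{{t}}, being closed subsets of these complete submodules, are also complete. -/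
/-!
Common setting: `K` is a characteristic-zero local field (a finite extension of `ℚ_p`)
with ring of integers `𝒪 = {c : K | ‖c‖ ≤ 1}`, maximal ideal `𝔭 = {c : K | ‖c‖ < 1}`,
residue field of cardinality `q` and the absolute value normalised by `‖π‖ = q⁻¹`.
We formalise the two-dimensional local fields `K((t))` (as `LaurentSeries K`) and
`K{{t}}` (as the submodule `mixedCarrier K` of `ℤ → K`), their higher topologies, and
the relevant functional-analytic notions (lattices, seminorms, boundedness,
c-compactness, compactoidness, completeness for nets, duality).
-/

open Filter Topology Set Pointwise
open scoped Classical

noncomputable section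

namespace TwoDimLF

variable (K : Type) [NontriviallyNormedField K]

/-!
Both higher topologies are generated by coefficient boxes `{f | ∀ i, f_i ∈ U_i}`. For `r > 0`
and `M ∈ ℤ`, the box with `U_i` the closed ball of radius `r` for `i < M` and `U_i = K` for
`i ≥ M` is a basic neighbourhood in either topology, and an open subgroup since the norm is
ultrametric. Hence a Cauchy net is uniformly Cauchy on every half-line `i < M`; as `K` is
complete it converges there uniformly, coefficientwise, to some `c : ℤ → K`, and `c` keeps its
coefficients in the closed sets cutting out the ring.

In `K[[t]]` the negative coefficients vanish and a basic neighbourhood constrains only finitely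
many of the others, so coefficientwise convergence suffices. In `𝒪{{t}}` a basic neighbourhood
contains `𝔭^c` in every coordinate and `𝒪` in all coordinates `i ≥ i₁`; differences of integral
coefficients lie in `𝒪`, so uniform convergence below `i₁` suffices, and it also forces `c_i → 0`
as `i → -∞`, i.e. `c ∈ K{{t}}`.
-/

open Metric

section AddTopology

variable {W : Type} [AddCommGroup W] {B : Set (Set W)}

theorem isOpen_addTopologyOf {U : Set W} (hU : U ∈ B) (hadd : ∀ a ∈ U, ∀ b ∈ U, a + b ∈ U) :
    IsOpen[addTopologyOf B] U := fun a ha =>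
  mem_map.2 <| mem_iInf_of_mem U <| mem_iInf_of_mem hU <| mem_principal.2 fun b hb => hadd a ha b hb

theorem tendsto_addTopologyOf {ι : Type} {l : Filter ι} (hne : B.Nonempty)
    (hdir : DirectedOn (· ⊇ ·) B) {x : ι → W} {a : W} (h : ∀ U ∈ B, ∀ᶠ j in l, x j - a ∈ U) :
    Tendsto x l (@nhds W (addTopologyOf B) a) := by
  let := addTopologyOf B
  intro s hs
  obtain ⟨t, hts, ht, hat⟩ := mem_nhds_iff.1 hs
  obtain ⟨U, hU, hUt⟩ := ((hasBasis_biInf_principal hdir hne).map (a + ·)).mem_iff.1 (ht a hat)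
  exact (h U hU).mono fun j hj => hts (hUt ⟨_, hj, add_sub_cancel a (x j)⟩)

end AddTopology

theorem exists_tendstoUniformlyOn_of_uniformCauchySeqOn {ι α κ E : Type*} [UniformSpace E]
    [CompleteSpace E] {p : Filter ι} [p.NeBot] {F : ι → α → E} {s : κ → Set α}
    (hs : ∀ a, ∃ k, a ∈ s k) (hF : ∀ k, UniformCauchySeqOn F p (s k)) :
    ∃ f : α → E, ∀ k, TendstoUniformlyOn F f p (s k) := by
  have hlim : ∀ a, ∃ L, Tendsto (F · a) p (𝓝 L) := fun a =>
    let ⟨k, hk⟩ := hs a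
    CompleteSpace.complete ((hF k).cauchy_map hk)
  choose f hf using hlim
  exact ⟨f, fun k => (hF k).tendstoUniformlyOn_of_tendsto fun a _ => hf a⟩

theorem uniformCauchySeqOn_of_forall_norm_sub_le {ι α E : Type*} [Preorder ι]
    [SeminormedAddCommGroup E] {F : ι → α → E} {s : Set α}
    (h : ∀ r > 0, ∃ j₀, ∀ j ≥ j₀, ∀ k ≥ j₀, ∀ a ∈ s, ‖F j a - F k a‖ ≤ r) :
    UniformCauchySeqOn F atTop s := by
  intro u hu
  obtain ⟨r, hr, hru⟩ := Metric.uniformity_basis_dist_le.mem_iff.1 hu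
  obtain ⟨j₀, hj₀⟩ := h r hr
  filter_upwards [(eventually_ge_atTop j₀).prod_mk (eventually_ge_atTop j₀)] with m hm a ha
  exact hru (by simpa [dist_eq_norm] using hj₀ _ hm.1 _ hm.2 a ha)

section HigherTopologies

variable {K}

theorem laurentBasic_nonempty : (laurentBasic K).Nonempty :=
  ⟨_, fun _ => univ, fun _ => ⟨isOpen_univ, mem_univ 0⟩, ⟨0, fun _ _ => rfl⟩, rfl⟩

theorem laurentBasic_directedOn : DirectedOn (· ⊇ ·) (laurentBasic K) := by
  rintro _ ⟨U, hU, ⟨N, hN⟩, rfl⟩ _ ⟨V, hV, ⟨M, hM⟩, rfl⟩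
  refine ⟨_, ⟨fun i => U i ∩ V i, fun i => ⟨(hU i).1.inter (hV i).1, (hU i).2, (hV i).2⟩,
    ⟨max N M, fun i hi => ?_⟩, rfl⟩, fun f hf i => (hf i).1, fun f hf i => (hf i).2⟩
  show U i ∩ V i = univ
  rw [hN i (le_of_max_le_left hi), hM i (le_of_max_le_right hi), univ_inter]

theorem setOf_norm_coeff_le_mem_nhds_laurentTop [IsUltrametricDist K] (M : ℤ) {r : ℝ} (hr : 0 < r) :
    {f : LaurentSeries K | ∀ i < M, ‖f.coeff i‖ ≤ r} ∈ @nhds _ (laurentTop K) 0 := by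
  refine @IsOpen.mem_nhds _ (laurentTop K) _ _ (isOpen_addTopologyOf
    ⟨fun i => if i < M then closedBall 0 r else univ, fun i => ?_,
      ⟨M, fun i hi => if_neg hi.not_gt⟩, ?_⟩ ?_) ?_
  · dsimp only
    split_ifs
    exacts [⟨IsUltrametricDist.isOpen_closedBall _ hr.ne', mem_closedBall_self hr.le⟩,
      ⟨isOpen_univ, mem_univ _⟩]
  · ext f; simp
  · intro f hf g hg i hi
    simpa using (IsUltrametricDist.norm_add_le_max _ _).trans (max_le (hf i hi) (hg i hi))
  · intro i _; simpa using hr.le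

theorem uniformCauchySeqOn_coeff_laurentTop [IsUltrametricDist K] {ι : Type} [Preorder ι]
    {x : ι → LaurentSeries K}
    (hx : ∀ U ∈ @nhds _ (laurentTop K) 0, ∃ j₀, ∀ j ≥ j₀, ∀ k ≥ j₀, x j - x k ∈ U) (M : ℤ) :
    UniformCauchySeqOn (fun j i => (x j).coeff i) atTop (Iio M) :=
  uniformCauchySeqOn_of_forall_norm_sub_le fun r hr => by
    simpa using hx _ (setOf_norm_coeff_le_mem_nhds_laurentTop M hr)

theorem tendsto_laurentTop_of_tendsto_coeff {ι : Type} {l : Filter ι} {x : ι → LaurentSeries K}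
    {a : LaurentSeries K} {N : ℤ} (hlow : ∀ j, ∀ i < N, (x j).coeff i = a.coeff i)
    (hcoeff : ∀ i, Tendsto (fun j => (x j).coeff i) l (𝓝 (a.coeff i))) :
    Tendsto x l (@nhds _ (laurentTop K) a) := by
  refine tendsto_addTopologyOf laurentBasic_nonempty laurentBasic_directedOn ?_
  rintro _ ⟨U, hU, ⟨M, hM⟩, rfl⟩
  have hwindow : ∀ᶠ j in l, ∀ i ∈ Finset.Ico N M, (x j).coeff i - a.coeff i ∈ U i :=
    (eventually_all_finset _).2 fun i _ =>
      tendsto_sub_nhds_zero_iff.2 (hcoeff i) ((hU i).1.mem_nhds (hU i).2)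
  filter_upwards [hwindow] with j hj i
  rw [HahnSeries.coeff_sub]
  rcases lt_or_ge i N with hiN | hiN
  · simpa [hlow j i hiN] using (hU i).2
  rcases lt_or_ge i M with hiM | hiM
  · exact hj i (Finset.mem_Ico.2 ⟨hiN, hiM⟩)
  · simp [hM i hiM]

theorem isNetComplete_laurentTop_setOf_coeff_mem [IsUltrametricDist K] [CompleteSpace K]
    {C : ℤ → Set K} (hC : ∀ i, IsClosed (C i)) (hneg : ∀ i < 0, C i = {0}) :
    IsNetComplete (laurentTop K) {f | ∀ i, f.coeff i ∈ C i} := by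
  intro ι _ _ hdir x hx hcauchy
  have : IsDirected ι (· ≤ ·) := ⟨hdir⟩
  obtain ⟨c, hc⟩ := exists_tendstoUniformlyOn_of_uniformCauchySeqOn (s := Iio)
    (fun i => ⟨i + 1, lt_add_one i⟩) (uniformCauchySeqOn_coeff_laurentTop hcauchy)
  have hlim : ∀ i, Tendsto (fun j => (x j).coeff i) atTop (𝓝 (c i)) :=
    fun i => (hc (i + 1)).tendsto_at (lt_add_one i)
  have hcC : ∀ i, c i ∈ C i :=
    fun i => (hC i).mem_of_tendsto (hlim i) (Eventually.of_forall fun j => hx j i)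
  have hc0 : ∀ i < 0, c i = 0 := fun i hi => by simpa [hneg i hi] using hcC i
  set a := HahnSeries.ofSuppBddBelow c ⟨0, fun i hi => not_lt.1 fun h => hi (hc0 i h)⟩
  have hac : a.coeff = c := HahnSeries.coeff_ofSuppBddBelow
  refine ⟨a, by simpa [hac] using hcC,
    tendsto_laurentTop_of_tendsto_coeff (N := 0) (fun j i hi => ?_) (by simpa [hac] using hlim)⟩
  simpa [hac, hc0 i hi, hneg i hi] using hx j i

theorem mixedBasic_nonempty (q : ℕ) : (mixedBasic K q).Nonempty :=
  ⟨_, fun _ => univ, fun _ => ⟨isOpen_univ, mem_univ 0⟩, ⟨0, fun _ => subset_univ _⟩,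
    fun _ => ⟨0, fun _ _ => subset_univ _⟩, rfl⟩

theorem mixedBasic_directedOn {q : ℕ} (hq : 1 ≤ q) : DirectedOn (· ⊇ ·) (mixedBasic K q) := by
  have hanti : Antitone fun c : ℤ => {x : K | ‖x‖ ≤ (q : ℝ) ^ (-c)} := fun c d hcd x hx =>
    hx.trans (zpow_le_zpow_right₀ (mod_cast hq : (1 : ℝ) ≤ q) (neg_le_neg hcd))
  rintro _ ⟨U, hU, ⟨c, hc⟩, hUtail, rfl⟩ _ ⟨V, hV, ⟨d, hd⟩, hVtail, rfl⟩
  refine ⟨_, ⟨fun i => U i ∩ V i, fun i => ⟨(hU i).1.inter (hV i).1, (hU i).2, (hV i).2⟩,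
    ⟨max c d, fun i => subset_inter ((hanti (le_max_left c d)).trans (hc i))
      ((hanti (le_max_right c d)).trans (hd i))⟩, fun l => ?_, rfl⟩,
    fun f hf i => (hf i).1, fun f hf i => (hf i).2⟩
  obtain ⟨i₁, hi₁⟩ := hUtail l
  obtain ⟨i₂, hi₂⟩ := hVtail l
  exact ⟨max i₁ i₂, fun i hi =>
    subset_inter (hi₁ i (le_of_max_le_left hi)) (hi₂ i (le_of_max_le_right hi))⟩

theorem setOf_norm_coeff_le_mem_nhds_mixedTop [IsUltrametricDist K] {q : ℕ} (hq : 1 < q)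
    (M : ℤ) {r : ℝ} (hr : 0 < r) :
    {f : Mt K | ∀ i < M, ‖f.1 i‖ ≤ r} ∈ @nhds _ (mixedTop K q) 0 := by
  obtain ⟨n, hn⟩ := exists_pow_lt_of_lt_one hr (inv_lt_one_of_one_lt₀ (mod_cast hq : (1 : ℝ) < q))
  have hball : {x : K | ‖x‖ ≤ (q : ℝ) ^ (-(n : ℤ))} ⊆ closedBall 0 r := fun x hx => by
    rw [zpow_neg, zpow_natCast, ← inv_pow] at hx
    simpa using hx.trans hn.le
  refine @IsOpen.mem_nhds _ (mixedTop K q) _ _ (isOpen_addTopologyOf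
    ⟨fun i => if i < M then closedBall 0 r else univ, fun i => ?_, ⟨n, fun i => ?_⟩,
      fun l => ⟨M, fun i hi => by simp [hi.not_gt]⟩, ?_⟩ ?_) ?_
  · dsimp only
    split_ifs
    exacts [⟨IsUltrametricDist.isOpen_closedBall _ hr.ne', mem_closedBall_self hr.le⟩,
      ⟨isOpen_univ, mem_univ _⟩]
  · dsimp only
    split_ifs
    exacts [hball, subset_univ _]
  · ext f; simp
  · intro f hf g hg i hi
    simpa using (IsUltrametricDist.norm_add_le_max _ _).trans (max_le (hf i hi) (hg i hi))
  · intro i _; simpa using hr.le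

theorem uniformCauchySeqOn_coeff_mixedTop [IsUltrametricDist K] {q : ℕ} (hq : 1 < q) {ι : Type}
    [Preorder ι] {x : ι → Mt K}
    (hx : ∀ U ∈ @nhds _ (mixedTop K q) 0, ∃ j₀, ∀ j ≥ j₀, ∀ k ≥ j₀, x j - x k ∈ U) (M : ℤ) :
    UniformCauchySeqOn (fun j i => (x j).1 i) atTop (Iio M) :=
  uniformCauchySeqOn_of_forall_norm_sub_le fun r hr => by
    simpa using hx _ (setOf_norm_coeff_le_mem_nhds_mixedTop hq M hr)

theorem mem_mixedCarrier_of_tendstoUniformlyOn {ι : Type} {l : Filter ι} [l.NeBot]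
    {x : ι → Mt K} {c : ℤ → K} (hbdd : ∃ C, ∀ i, ‖c i‖ ≤ C) {M : ℤ}
    (hunif : TendstoUniformlyOn (fun j i => (x j).1 i) c l (Iio M)) : c ∈ mixedCarrier K :=
  ⟨hbdd, ((tendstoUniformlyOn_iff_tendstoUniformlyOnFilter.1 hunif).mono_right
    (le_principal_iff.2 (Iio_mem_atBot M))).tendsto_of_eventually_tendsto
      (Eventually.of_forall fun j => (x j).2.2) tendsto_const_nhds⟩

theorem tendsto_mixedTop_of_tendstoUniformlyOn {q : ℕ} (hq : 1 ≤ q) {ι : Type} {l : Filter ι}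
    {x : ι → Mt K} {a : Mt K} (hbdd : ∀ j i, ‖(x j).1 i - a.1 i‖ ≤ 1)
    (hunif : ∀ M, TendstoUniformlyOn (fun j i => (x j).1 i) a.1 l (Iio M)) :
    Tendsto x l (@nhds _ (mixedTop K q) a) := by
  refine tendsto_addTopologyOf (mixedBasic_nonempty q) (mixedBasic_directedOn hq) ?_
  rintro _ ⟨V, -, ⟨c, hc⟩, htail, rfl⟩
  obtain ⟨M, hM⟩ := htail 0
  have hq0 : (0 : ℝ) < q := by exact_mod_cast hq
  filter_upwards [Metric.tendstoUniformlyOn_iff.1 (hunif M) _ (zpow_pos hq0 (-c))] with j hj i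
  rcases lt_or_ge i M with hi | hi
  · exact hc i (by simpa [dist_eq_norm, norm_sub_rev] using (hj i hi).le)
  · exact hM i hi (by simpa using hbdd j i)

theorem isNetComplete_mixedTop_setOf_coeff_mem [IsUltrametricDist K] [CompleteSpace K] {q : ℕ}
    (hq : 1 < q) {C : ℤ → Set K} (hC : ∀ i, IsClosed (C i)) (hC1 : ∀ i, C i ⊆ closedBall 0 1) :
    IsNetComplete (mixedTop K q) {f | ∀ i, f.1 i ∈ C i} := by
  intro ι _ _ hdir x hx hcauchy
  have : IsDirected ι (· ≤ ·) := ⟨hdir⟩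
  obtain ⟨c, hc⟩ := exists_tendstoUniformlyOn_of_uniformCauchySeqOn (s := Iio)
    (fun i => ⟨i + 1, lt_add_one i⟩) (uniformCauchySeqOn_coeff_mixedTop hq hcauchy)
  have hcC : ∀ i, c i ∈ C i := fun i => (hC i).mem_of_tendsto
    ((hc (i + 1)).tendsto_at (lt_add_one i)) (Eventually.of_forall fun j => hx j i)
  have hc1 : ∀ i, ‖c i‖ ≤ 1 := fun i => by simpa using hC1 i (hcC i)
  refine ⟨⟨c, mem_mixedCarrier_of_tendstoUniformlyOn ⟨1, hc1⟩ (hc 0)⟩, hcC,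
    tendsto_mixedTop_of_tendstoUniformlyOn hq.le (fun j i => ?_) hc⟩
  simpa [dist_eq_norm] using (dist_triangle_max ((x j).1 i) 0 (c i)).trans
    (max_le (hC1 i (hx j i)) (by simpa using hc1 i))

theorem laurentIntegers_eq_setOf_coeff_mem :
    laurentIntegers K = {f | ∀ i, f.coeff i ∈ if i < 0 then ({0} : Set K) else univ} := by
  ext f; simp [laurentIntegers]

theorem laurentRankTwo_eq_setOf_coeff_mem :
    laurentRankTwo K = {f | ∀ i, f.coeff i ∈
      if i < 0 then ({0} : Set K) else if i = 0 then closedBall 0 1 else univ} := by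
  ext f
  simp only [laurentRankTwo, mem_ofPred_eq]
  refine ⟨fun ⟨hneg, h0⟩ i => ?_,
    fun h => ⟨fun i hi => by simpa [hi] using h i, by simpa using h 0⟩⟩
  split_ifs with hi hi0
  exacts [hneg i hi, by simpa [hi0] using h0, mem_univ _]

theorem mixedIntegers_eq_setOf_coeff_mem :
    mixedIntegers K = {f | ∀ i, f.1 i ∈ closedBall (0 : K) 1} := by
  ext f; simp [mixedIntegers]

theorem mixedRankTwo_eq_setOf_coeff_mem (q : ℕ) :
    mixedRankTwo K q = {f | ∀ i, f.1 i ∈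
      if i < 0 then closedBall (0 : K) (q : ℝ)⁻¹ else closedBall 0 1} := by
  ext f
  simp only [mixedRankTwo, mem_ofPred_eq]
  refine ⟨fun ⟨hneg, hnonneg⟩ i => ?_, fun h => ⟨fun i hi => by simpa [hi] using h i,
    fun i hi => by simpa [hi.not_gt] using h i⟩⟩
  split_ifs with hi
  exacts [by simpa using hneg i hi, by simpa using hnonneg i (not_lt.1 hi)]

end HigherTopologies

/-- The ring of integers `K[[t]]` is a complete `𝒪`-submodule of `K((t))`,
and the ring of integers `𝒪{{t}}` is a complete `𝒪`-submodule of `K{{t}}` (every Cauchy net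
in them converges to an element of them); consequently the rank-two rings of integers
`𝒪 + tK[[t]] ⊆ K((t))` and `Σ_{i<0} 𝔭 t^i + Σ_{i≥0} 𝒪 t^i ⊆ K{{t}}` are also complete. -/
theorem statement12 (q : ℕ) (hK : IsCharZeroLocalField K q) :
    IsNetComplete (laurentTop K) (laurentIntegers K) ∧
    IsNetComplete (mixedTop K q) (mixedIntegers K) ∧
    IsNetComplete (laurentTop K) (laurentRankTwo K) ∧
    IsNetComplete (mixedTop K q) (mixedRankTwo K q) := by
  have := hK.complete
  have := IsUltrametricDist.isUltrametricDist_of_forall_norm_add_le_max_norm hK.nonarch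
  refine ⟨?_, ?_, ?_, ?_⟩
  · rw [laurentIntegers_eq_setOf_coeff_mem]
    exact isNetComplete_laurentTop_setOf_coeff_mem (fun i => by split_ifs <;> simp)
      fun i hi => if_pos hi
  · rw [mixedIntegers_eq_setOf_coeff_mem]
    exact isNetComplete_mixedTop_setOf_coeff_mem hK.one_lt_q (fun _ => isClosed_closedBall)
      fun _ => subset_rfl
  · rw [laurentRankTwo_eq_setOf_coeff_mem]
    exact isNetComplete_laurentTop_setOf_coeff_mem
      (fun i => by split_ifs <;> simp [isClosed_closedBall]) fun i hi => if_pos hi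
  · rw [mixedRankTwo_eq_setOf_coeff_mem]
    refine isNetComplete_mixedTop_setOf_coeff_mem hK.one_lt_q
      (fun i => by split_ifs <;> exact isClosed_closedBall) fun i => ?_
    split_ifs
    exacts [closedBall_subset_closedBall (inv_le_one_of_one_le₀ (mod_cast hK.one_lt_q.le)),
      subset_rfl]

end TwoDimLF
end
end
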